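/- arXiv:2508.07894 — 5 statements merged into one kernel-verified Lean document; each statement's English description precedes it below -/
import Mathlib

section
/- Let p be an integer and q a prime dividing both p^2 + 3p + 9 and p^3 + 5p^2 + 10p + 7. Then q = 181. -/
theorem stmt_0 (p : ℤ) (q : ℕ) (hq : q.Prime)
    (h1 : (q : ℤ) ∣ p ^ 2 + 3 * p + 9)
    (h2 : (q : ℤ) ∣ p ^ 3 + 5 * p ^ 2 + 10 * p + 7) :
    q = 181 := by
  have h3 : (q : ℤ) ∣ 5 * p + 11 := by
    have := dvd_sub ((h1.mul_left (p + 2))) h2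
    have e : (p + 2) * (p ^ 2 + 3 * p + 9) - (p ^ 3 + 5 * p ^ 2 + 10 * p + 7) = 5 * p + 11 := by ring
    rwa [e] at this
  have h4 : (q : ℤ) ∣ 181 := by
    have := dvd_sub (h1.mul_left 25) (h3.mul_left (5 * p + 4))
    have e : 25 * (p ^ 2 + 3 * p + 9) - (5 * p + 4) * (5 * p + 11) = 181 := by ring
    rwa [e] at this
  have h5 : q ∣ 181 := by exact_mod_cast h4
  have : Nat.Prime 181 := by norm_num
  exact ((Nat.prime_dvd_prime_iff_eq hq this).mp h5)
end

section
/- Let p be an integer and ℓ a prime dividing both p^2 + 3p + 9 and p^4 + 5p^3 + 15p^2 + 25p + 25. Then ℓ = 541. -/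
theorem stmt_1 (p : ℤ) (ℓ : ℕ) (hℓ : ℓ.Prime)
    (h1 : (ℓ : ℤ) ∣ p ^ 2 + 3 * p + 9)
    (h2 : (ℓ : ℤ) ∣ p ^ 4 + 5 * p ^ 3 + 15 * p ^ 2 + 25 * p + 25) :
    ℓ = 541 := by
  have key : (ℓ : ℤ) ∣ 541 := by
    have := Dvd.dvd.add (h2.mul_left (4 - 7 * p))
      (h1.mul_left (7 * p ^ 3 + 10 * p ^ 2 - 8 * p + 49))
    have e : (4 - 7 * p) * (p ^ 4 + 5 * p ^ 3 + 15 * p ^ 2 + 25 * p + 25) +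
        (7 * p ^ 3 + 10 * p ^ 2 - 8 * p + 49) * (p ^ 2 + 3 * p + 9) = 541 := by ring
    rwa [e] at this
  have : ℓ ∣ 541 := by exact_mod_cast key
  have h541 : Nat.Prime 541 := by norm_num
  exact ((Nat.prime_dvd_prime_iff_eq hℓ h541).mp this)
end

section
/- Let p, q, r, s be distinct odd primes with p ≡ q ≡ r ≡ 3 (mod 4), s ≡ 1 (mod 4), such that q·r is not a quadratic residue modulo p. Then the equation p·a^2 − 2·q·r·s·b^2 = 1 has no integer solutions a, b. -/
theorem stmt_10 (p q r s : ℕ) [Fact p.Prime] (hq : q.Prime) (hr : r.Prime) (hs : s.Prime)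
    (hpq : p ≠ q) (hpr : p ≠ r) (hps : p ≠ s) (hqr : q ≠ r) (hqs : q ≠ s) (hrs : r ≠ s)
    (hp4 : p % 4 = 3) (hq4 : q % 4 = 3) (hr4 : r % 4 = 3) (hs4 : s % 4 = 1)
    (hleg : legendreSym p ((q : ℤ) * r) = -1) :
    ¬ ∃ a b : ℤ, (p : ℤ) * a ^ 2 - 2 * q * r * s * b ^ 2 = 1 := by
  rintro ⟨a, b, h⟩
  haveI fq : Fact q.Prime := ⟨hq⟩
  haveI fr : Fact r.Prime := ⟨hr⟩
  have hp := (Fact.out : p.Prime)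
  -- helper: for t ∈ {q,r}, legendreSym p t = -1
  have key : ∀ t : ℕ, ∀ _ : Fact t.Prime, t % 4 = 3 → p ≠ t →
      ((t : ℤ) ∣ 2 * q * r * s) → legendreSym p (t : ℤ) = -1 := by
    intro t ft ht4 hpt hdvd
    -- reduce h mod t
    have h' : ((p : ZMod t)) * (a : ZMod t) ^ 2 = 1 := by
      have := congrArg (Int.cast : ℤ → ZMod t) h
      push_cast at this
      obtain ⟨c, hc⟩ := hdvd
      have hz : ((2 * q * r * s : ℤ) : ZMod t) = 0 := by
        rw [hc]; push_cast
        simp [ZMod.natCast_self]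
      push_cast at hz
      rw [show ((2:ZMod t) * q * r * s * (b:ZMod t)^2 = (2*(q:ZMod t)*r*s) * b^2) from by ring,
        hz, zero_mul, sub_zero] at this
      exact this
    have ha : (a : ZMod t) ≠ 0 := by
      intro h0
      rw [h0] at h'
      simp at h'
    have hp0 : ((p : ℤ) : ZMod t) ≠ 0 := by
      push_cast
      rw [Ne, ZMod.natCast_eq_zero_iff]
      intro hdvd'
      exact hpt ((Nat.prime_dvd_prime_iff_eq ft.out hp).mp hdvd').symm
    have hsq : IsSquare (((p : ℤ)) : ZMod t) := by
      refine ⟨(a : ZMod t)⁻¹, ?_⟩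
      field_simp
      push_cast
      linear_combination h'
    have h1 : legendreSym t (p : ℤ) = 1 := (legendreSym.eq_one_iff t hp0).mpr hsq
    have := legendreSym.quadratic_reciprocity_three_mod_four hp4 ht4
    rw [h1] at this
    omega
  have hq1 : legendreSym p (q : ℤ) = -1 :=
    key q fq hq4 hpq ⟨2 * r * s, by ring⟩
  have hr1 : legendreSym p (r : ℤ) = -1 :=
    key r fr hr4 hpr ⟨2 * q * s, by ring⟩
  rw [legendreSym.mul, hq1, hr1] at hleg
  norm_num at hleg
end

section
/- Let q, r, s be distinct primes with q ≡ r ≡ 3 (mod 4), s ≡ 1 (mod 4), (q/s) = −1 and (r/s) = −1 (Legendre symbols), and let x, y be positive integers with x odd, x^2 − q·r·s·y^2 = 1, (x+1)/2 and (x−1)/2 coprime. Then the squarefree part of (x+1)/2 is not divisible by s; i.e., in any decomposition (x+1)/2 = t1·a^2, (x−1)/2 = t2·b^2 with t1·t2 = q·r·s, one has t1 ∉ {s, q·s, r·s, q·r·s}. -/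
lemma sq_helper {F : Type*} [Field F] (u v : F) (h : u * v ^ 2 = 1) : IsSquare u := by
  have hv : v ≠ 0 := by rintro rfl; simp at h
  exact ⟨v⁻¹, by field_simp; linear_combination h⟩

theorem stmt_12 (q r s : ℕ) [Fact s.Prime] (hq : q.Prime) (hr : r.Prime)
    (hqr : q ≠ r) (hqs : q ≠ s) (hrs : r ≠ s)
    (hq4 : q % 4 = 3) (hr4 : r % 4 = 3) (hs4 : s % 4 = 1)
    (hlq : legendreSym s q = -1) (hlr : legendreSym s r = -1)
    (x y : ℤ) (hx : 0 < x) (hy : 0 < y) (hxodd : Odd x)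
    (hpell : x ^ 2 - (q : ℤ) * r * s * y ^ 2 = 1)
    (hcop : IsCoprime ((x + 1) / 2) ((x - 1) / 2)) :
    ∀ t1 t2 a b : ℤ, t1 * t2 = (q : ℤ) * r * s →
      (x + 1) / 2 = t1 * a ^ 2 → (x - 1) / 2 = t2 * b ^ 2 →
      t1 ≠ (s : ℤ) ∧ t1 ≠ (q : ℤ) * s ∧ t1 ≠ (r : ℤ) * s ∧ t1 ≠ (q : ℤ) * r * s := by
  haveI hqF : Fact q.Prime := ⟨hq⟩
  haveI hrF : Fact r.Prime := ⟨hr⟩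
  have hq0 : (q : ℤ) ≠ 0 := Int.natCast_ne_zero.mpr hq.ne_zero
  have hr0 : (r : ℤ) ≠ 0 := Int.natCast_ne_zero.mpr hr.ne_zero
  have hs0 : (s : ℤ) ≠ 0 := Int.natCast_ne_zero.mpr (Fact.out (p := s.Prime)).ne_zero
  intro t1 t2 a b hmul h1 h2
  obtain ⟨k, hk⟩ := hxodd
  have key : t1 * a ^ 2 - t2 * b ^ 2 = 1 := by rw [← h1, ← h2]; omega
  have hm1s : IsSquare (-1 : ZMod s) := ZMod.exists_sq_eq_neg_one_iff.mpr (by omega)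
  refine ⟨?_, ?_, ?_, ?_⟩
  · -- t1 = s, t2 = q*r, use mod q and reciprocity
    rintro rfl
    have ht2 : t2 = (q : ℤ) * r := by
      apply mul_left_cancel₀ hs0; linear_combination hmul
    subst ht2
    have hz : (s : ZMod q) * (a : ZMod q) ^ 2 = 1 := by
      have := congrArg (fun n : ℤ => (n : ZMod q)) key
      push_cast at this
      simpa [ZMod.natCast_self] using this
    have hsq : IsSquare ((s : ℤ) : ZMod q) := by
      push_cast; exact sq_helper _ _ hz
    have hrecip : legendreSym q s = -1 := by
      rw [legendreSym.quadratic_reciprocity_one_mod_four hs4 (by omega)]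
      exact hlq
    exact (legendreSym.eq_neg_one_iff q).mp hrecip hsq
  · -- t1 = q*s, t2 = r, use mod s
    rintro rfl
    have ht2 : t2 = (r : ℤ) := by
      apply mul_left_cancel₀ (mul_ne_zero hq0 hs0); linear_combination hmul
    subst ht2
    have hz : (-(r : ZMod s)) * (b : ZMod s) ^ 2 = 1 := by
      have := congrArg (fun n : ℤ => (n : ZMod s)) key
      push_cast at this
      rw [ZMod.natCast_self] at this
      linear_combination this
    have hsq : IsSquare (-(r : ZMod s)) := sq_helper _ _ hz
    have : IsSquare ((r : ℤ) : ZMod s) := by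
      push_cast
      simpa using hm1s.mul hsq
    exact (legendreSym.eq_neg_one_iff s).mp hlr this
  · -- t1 = r*s, t2 = q, use mod s
    rintro rfl
    have ht2 : t2 = (q : ℤ) := by
      apply mul_left_cancel₀ (mul_ne_zero hr0 hs0); linear_combination hmul
    subst ht2
    have hz : (-(q : ZMod s)) * (b : ZMod s) ^ 2 = 1 := by
      have := congrArg (fun n : ℤ => (n : ZMod s)) key
      push_cast at this
      rw [ZMod.natCast_self] at this
      linear_combination this
    have hsq : IsSquare (-(q : ZMod s)) := sq_helper _ _ hz
    have : IsSquare ((q : ℤ) : ZMod s) := by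
      push_cast
      simpa using hm1s.mul hsq
    exact (legendreSym.eq_neg_one_iff s).mp hlq this
  · -- t1 = q*r*s, t2 = 1, use mod q
    rintro rfl
    have ht2 : t2 = 1 := by
      apply mul_left_cancel₀ (mul_ne_zero (mul_ne_zero hq0 hr0) hs0)
      linear_combination hmul
    subst ht2
    have hz : (-1 : ZMod q) * (b : ZMod q) ^ 2 = 1 := by
      have := congrArg (fun n : ℤ => (n : ZMod q)) key
      push_cast at this
      rw [ZMod.natCast_self] at this
      linear_combination this
    have hsq : IsSquare (-1 : ZMod q) := sq_helper _ _ hz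
    exact (ZMod.exists_sq_eq_neg_one_iff.mp hsq) hq4
end

section
/- Let D ≡ 1 (mod 4) be a squarefree positive integer with a prime factor ≡ 3 (mod 4), and let u = x + y√D (x, y positive integers) be a solution of x^2 − D·y^2 = 1. Then 4 divides y. -/
theorem stmt_17 (D : ℤ) (hD : 0 < D) (hsf : Squarefree D) (hD4 : D % 4 = 1)
    (hfac : ∃ p : ℤ, Prime p ∧ p ∣ D ∧ p % 4 = 3)
    (x y : ℤ) (hx : 0 < x) (hy : 0 < y)
    (hpell : x ^ 2 - D * y ^ 2 = 1) :
    4 ∣ y := by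
  have h8 : ((x : ZMod 8))^2 - (D : ZMod 8) * (y : ZMod 8)^2 = 1 := by
    have := congrArg (fun n : ℤ => (n : ZMod 8)) hpell
    push_cast at this
    exact this
  obtain ⟨k, hk⟩ : (4:ℤ) ∣ D - 1 := by omega
  have hD8 : (D : ZMod 8) = 4 * (k : ZMod 8) + 1 := by
    have hD' : (D:ℤ) = 4*k+1 := by linarith
    rw [hD']; push_cast; ring
  suffices hz : ((y : ℤ) : ZMod 4) = 0 by
    exact_mod_cast (ZMod.intCast_zmod_eq_zero_iff_dvd y 4).mp hz
  have hcast : ((y : ℤ) : ZMod 4) = ZMod.castHom (show (4:ℕ) ∣ 8 by norm_num) (ZMod 4) ((y : ℤ) : ZMod 8) := by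
    simp
  rw [hcast]
  rw [hD8] at h8
  revert h8
  generalize (x : ZMod 8) = a
  generalize ((y : ℤ) : ZMod 8) = b
  generalize (k : ZMod 8) = c
  revert a b c
  decide
end
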